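/- Let k ≥ 1, let A ∈ ℝ^k and let B be a tuple of positive real numbers. Let a(n) be complex numbers indexed by n ∈ ℤ^k, supported on the box (A, A+B] = {n : A_i < n_i ≤ A_i + B_i for all i}. Let I = (C, C+D] be any product of intervals with I ⊆ (A, A+B]. Then |Σ_{n ∈ I ∩ ℤ^k} a(n)| ≤ C_k (∏_{i=1}^k log(B_i + 2)) · sup_{θ ∈ ℝ^k} |Σ_{n ∈ (A,A+B] ∩ ℤ^k} a(n) e(θ·n)|, where e(t) = e^{2πi t}, θ·n = θ_1 n_1 + ⋯ + θ_k n_k, and C_k is a constant depending only on k. -/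

import Mathlib

/-!
Inside the box of integer points `(⌊A⌋, ⌊A⌋ + N]`, `N_i = ⌊A_i + B_i⌋ - ⌊A_i⌋`, no two points of a
coordinate window are congruent modulo `N_i`, so the indicator of the sub-box `I` expands in the
characters `n ↦ e(θ·n)` with `θ_i ∈ {0, 1/N_i, …, (N_i - 1)/N_i}`. This writes the sum over `I` as a
combination of the twisted sums over the whole box, and the coefficients factor over the
coordinates. In each coordinate the coefficient at `j/N` is a geometric sum bounded by
`1 / (N |sin(πj/N)|) ≤ 1/(2j) + 1/(2(N-j))`, so their `ℓ¹`-norm is at most `2 + log N`, a harmonic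
number plus the trivial term `j = 0`.
-/

open scoped BigOperators

/-- `e(t) = e^{2πit}`. -/
noncomputable def e (t : ℝ) : ℂ := Complex.exp (2 * Real.pi * Complex.I * t)

open Finset Real

lemma e_add (x y : ℝ) : e (x + y) = e x * e y := by
  simp only [e, Complex.ofReal_add, mul_add, Complex.exp_add]

lemma e_sum {ι : Type*} (s : Finset ι) (f : ι → ℝ) : e (∑ i ∈ s, f i) = ∏ i ∈ s, e (f i) := by
  simp only [e, Complex.ofReal_sum, mul_sum, Complex.exp_sum]

lemma e_zero : e 0 = 1 := by simp [e]

lemma e_natCast_mul (n : ℕ) (x : ℝ) : e (n * x) = e x ^ n := by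
  rw [e, e, ← Complex.exp_nat_mul]
  push_cast
  ring_nf

lemma e_eq_one_iff {x : ℝ} : e x = 1 ↔ ∃ n : ℤ, x = n := by
  have h2π : (2 * π * Complex.I : ℂ) ≠ 0 := by simp [Real.pi_ne_zero]
  rw [e, Complex.exp_eq_one_iff]
  refine exists_congr fun n => ?_
  rw [mul_comm (n : ℂ), mul_right_inj' h2π]
  exact_mod_cast Iff.rfl

lemma e_intCast (n : ℤ) : e n = 1 := e_eq_one_iff.2 ⟨n, rfl⟩

lemma norm_e (x : ℝ) : ‖e x‖ = 1 := by
  rw [e, show (2 * π * Complex.I * x : ℂ) = (2 * π * x : ℝ) * Complex.I by push_cast; ring]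
  exact Complex.norm_exp_ofReal_mul_I _

lemma norm_e_sub_one (x : ℝ) : ‖e x - 1‖ = 2 * |sin (π * x)| := by
  rw [e, show (2 * π * Complex.I * x : ℂ) = Complex.I * (2 * π * x : ℝ) by push_cast; ring,
    Complex.norm_exp_I_mul_ofReal_sub_one, norm_mul, Real.norm_eq_abs, Real.norm_eq_abs]
  ring_nf

lemma sum_range_e_div_mul {N : ℕ} (hN : 0 < N) {d : ℤ} (hd : |d| < N) :
    ∑ j ∈ range N, e (j / N * d) = if d = 0 then (N : ℂ) else 0 := by
  have hN' : (N : ℝ) ≠ 0 := by positivity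
  have hpow : ∀ j : ℕ, e (j / N * d) = e (d / N) ^ j := fun j => by
    rw [← e_natCast_mul]; ring_nf
  simp only [hpow]
  split_ifs with hd0
  · simp [hd0, e_zero]
  have hne : e (d / N) ≠ 1 := by
    rintro h
    obtain ⟨n, hn⟩ := e_eq_one_iff.1 h
    have hdn : d = N * n := by
      rw [div_eq_iff hN'] at hn
      exact_mod_cast (hn.trans (mul_comm _ _))
    exact hd0 (Int.eq_zero_of_abs_lt_dvd ⟨n, hdn⟩ hd)
  have hroot : e (d / N) ^ N = 1 := by
    rw [← e_natCast_mul, mul_div_cancel₀ _ hN', e_intCast]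
  rw [geom_sum_eq hne, hroot, sub_self, zero_div]

lemma norm_sum_Ioc_e_mul_le {ξ : ℝ} (hξ : e ξ ≠ 1) (p q : ℤ) :
    ‖∑ m ∈ Ioc p q, e (ξ * m)‖ ≤ 2 / ‖e ξ - 1‖ := by
  have hterm : ∀ l : ℕ, e (ξ * ↑(p + 1 + l)) = e (ξ * ↑(p + 1)) * e ξ ^ l := fun l => by
    rw [← e_natCast_mul, ← e_add]; push_cast; ring_nf
  rw [Int.Ioc_eq_finset_map, sum_map]
  simp only [Function.Embedding.trans_apply, Nat.castEmbedding_apply, addLeftEmbedding_apply,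
    hterm, ← mul_sum, norm_mul, norm_e, one_mul, geom_sum_eq hξ, norm_div]
  gcongr
  calc ‖e ξ ^ (q - p).toNat - 1‖ ≤ ‖e ξ ^ (q - p).toNat‖ + ‖(1 : ℂ)‖ := norm_sub_le _ _
    _ = 2 := by rw [norm_pow, norm_e]; norm_num

lemma inv_sin_pi_mul_le {x : ℝ} (hx₀ : 0 < x) (hx₁ : x < 1) :
    (sin (π * x))⁻¹ ≤ (2 * x)⁻¹ + (2 * (1 - x))⁻¹ := by
  rcases le_total x (1 / 2) with hx | hx
  · have hsin : 2 * x ≤ sin (π * x) := by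
      have := mul_le_sin (x := π * x) (by positivity) (by nlinarith [pi_pos])
      rwa [← mul_assoc, div_mul_cancel₀ _ pi_ne_zero] at this
    calc (sin (π * x))⁻¹ ≤ (2 * x)⁻¹ := by gcongr
      _ ≤ _ := le_add_of_nonneg_right (by simp only [inv_nonneg]; linarith)
  · have hsin : 2 * (1 - x) ≤ sin (π * x) := by
      have := mul_le_sin (x := π * (1 - x)) (by nlinarith [pi_pos]) (by nlinarith [pi_pos])
      rwa [← mul_assoc, div_mul_cancel₀ _ pi_ne_zero, mul_one_sub π, sin_pi_sub] at this
    calc (sin (π * x))⁻¹ ≤ (2 * (1 - x))⁻¹ := by gcongr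
      _ ≤ _ := le_add_of_nonneg_left (by simp only [inv_nonneg]; linarith)

noncomputable def indicatorCoeff (N : ℕ) (s : Finset ℤ) (ξ : ℝ) : ℂ :=
  (N : ℂ)⁻¹ * ∑ m ∈ s, e (-ξ * m)

lemma norm_indicatorCoeff_le (N : ℕ) (s : Finset ℤ) (ξ : ℝ) :
    ‖indicatorCoeff N s ξ‖ ≤ #s / N := by
  rw [indicatorCoeff, norm_mul, norm_inv, Complex.norm_natCast, inv_mul_eq_div]
  gcongr
  calc ‖∑ m ∈ s, e (-ξ * m)‖ ≤ ∑ m ∈ s, ‖e (-ξ * m)‖ := norm_sum_le _ _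
    _ = #s := by simp [norm_e]

lemma norm_indicatorCoeff_Ioc_le {N j : ℕ} (hj : 0 < j) (hjN : j < N) (p q : ℤ) :
    ‖indicatorCoeff N (Ioc p q) (j / N)‖ ≤ (2 * (j : ℝ))⁻¹ + (2 * ((N : ℝ) - j))⁻¹ := by
  have hN : (0 : ℝ) < N := by exact_mod_cast hj.trans hjN
  set ξ : ℝ := j / N
  have hξ₀ : 0 < ξ := by positivity
  have hξ₁ : ξ < 1 := (div_lt_one hN).2 (by exact_mod_cast hjN)
  have hsin : 0 < sin (π * ξ) := sin_pos_of_pos_of_lt_pi (by positivity) (by nlinarith [pi_pos])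
  have hdist : ‖e (-ξ) - 1‖ = 2 * sin (π * ξ) := by
    rw [norm_e_sub_one, mul_neg, sin_neg, abs_neg, abs_of_pos hsin]
  have hne : e (-ξ) ≠ 1 := fun h => by simp [h] at hdist; linarith
  calc ‖indicatorCoeff N (Ioc p q) ξ‖ = (N : ℝ)⁻¹ * ‖∑ m ∈ Ioc p q, e (-ξ * m)‖ := by
        rw [indicatorCoeff, norm_mul, norm_inv, Complex.norm_natCast]
    _ ≤ (N : ℝ)⁻¹ * (sin (π * ξ))⁻¹ := by
        gcongr
        calc _ ≤ 2 / ‖e (-ξ) - 1‖ := norm_sum_Ioc_e_mul_le hne p q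
          _ = (sin (π * ξ))⁻¹ := by rw [hdist]; field_simp
    _ ≤ (N : ℝ)⁻¹ * ((2 * ξ)⁻¹ + (2 * (1 - ξ))⁻¹) := by gcongr; exact inv_sin_pi_mul_le hξ₀ hξ₁
    _ = (2 * (j : ℝ))⁻¹ + (2 * ((N : ℝ) - j))⁻¹ := by
        have : (N : ℝ) - j ≠ 0 := by
          have : (j : ℝ) < N := by exact_mod_cast hjN
          linarith
        simp only [ξ]
        field_simp

lemma sum_norm_indicatorCoeff_Ioc_le {N : ℕ} {p q : ℤ} (hpq : q - p ≤ N) :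
    ∑ j ∈ range N, ‖indicatorCoeff N (Ioc p q) (j / N)‖ ≤ 2 + log N := by
  obtain _ | K := N
  · simp
  have hzero : ‖indicatorCoeff (K + 1) (Ioc p q) ((0 : ℕ) / (K + 1 : ℕ))‖ ≤ 1 := by
    refine (norm_indicatorCoeff_le _ _ _).trans ((div_le_one (by positivity)).2 ?_)
    rw [Int.card_Ioc]
    exact_mod_cast Int.toNat_le.2 hpq
  have hharmonic : (harmonic K : ℝ) = ∑ j ∈ range K, ((j : ℝ) + 1)⁻¹ := by
    simp [harmonic]
  have hreflect : ∑ j ∈ range K, ((K : ℝ) - j)⁻¹ = harmonic K := by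
    rw [hharmonic, ← sum_range_reflect]
    refine sum_congr rfl fun j hj => ?_
    have : ((K - 1 - j : ℕ) : ℝ) + j + 1 = K := by
      exact_mod_cast (by simp at hj; omega : K - 1 - j + j + 1 = K)
    congr 1
    linarith
  have hfreq : ∑ j ∈ range K, ‖indicatorCoeff (K + 1) (Ioc p q) ((j + 1 : ℕ) / (K + 1 : ℕ))‖
      ≤ harmonic K := by
    calc _ ≤ ∑ j ∈ range K, ((2 * ((j : ℝ) + 1))⁻¹ + (2 * ((K : ℝ) - j))⁻¹) := by
          refine sum_le_sum fun j hj => ?_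
          refine (norm_indicatorCoeff_Ioc_le (N := K + 1) (j := j + 1) (by omega)
            (by simp at hj; omega) p q).trans_eq ?_
          push_cast
          ring
      _ = 2⁻¹ * (harmonic K + harmonic K : ℝ) := by
          simp only [sum_add_distrib, mul_inv, ← mul_sum]
          rw [hreflect, hharmonic]
          ring
      _ = harmonic K := by ring
  have hlog : log K ≤ log (K + 1 : ℕ) := by
    rcases K.eq_zero_or_pos with rfl | hK0
    · simp
    · exact log_le_log (by exact_mod_cast hK0) (by push_cast; linarith)
  rw [sum_range_succ']
  linarith [harmonic_le_one_add_log K]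

lemma indicator_eq_sum_indicatorCoeff_mul {N : ℕ} {L x : ℤ} {s : Finset ℤ}
    (hs : s ⊆ Ioc L (L + N)) (hx : x ∈ Ioc L (L + N)) :
    (if x ∈ s then 1 else 0 : ℂ) = ∑ j ∈ range N, indicatorCoeff N s (j / N) * e (j / N * x) := by
  rw [mem_Ioc] at hx
  have hN : 0 < N := by omega
  have hterm : ∀ j : ℕ, indicatorCoeff N s (j / N) * e (j / N * x)
      = (N : ℂ)⁻¹ * ∑ m ∈ s, e (j / N * ↑(x - m)) := fun j => by
    rw [indicatorCoeff, mul_assoc, sum_mul]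
    congr 1
    refine sum_congr rfl fun m _ => ?_
    rw [← e_add]
    push_cast
    ring_nf
  have horth : ∀ m ∈ s, ∑ j ∈ range N, e (j / N * ↑(x - m)) = if x = m then (N : ℂ) else 0 :=
    fun m hm => by
      have hm := mem_Ioc.1 (hs hm)
      simp only [sum_range_e_div_mul hN (abs_lt.2 ⟨by omega, by omega⟩ : |x - m| < N),
        sub_eq_zero]
  simp only [hterm, ← mul_sum]
  rw [sum_comm, sum_congr rfl horth, sum_ite_eq]
  split_ifs
  · exact (inv_mul_cancel₀ (by exact_mod_cast hN.ne')).symm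
  · rw [mul_zero]

section Box

variable {k : ℕ} {L : Fin k → ℤ} {N : Fin k → ℕ} {s : Fin k → Finset ℤ}

lemma sum_piFinset_eq_sum_indicatorCoeff_mul (hs : ∀ i, s i ⊆ Ioc (L i) (L i + N i))
    (a : (Fin k → ℤ) → ℂ) :
    ∑ n ∈ Fintype.piFinset s, a n =
      ∑ j ∈ Fintype.piFinset (fun i => range (N i)),
        (∏ i, indicatorCoeff (N i) (s i) (j i / N i)) *
          ∑ n ∈ Fintype.piFinset (fun i => Ioc (L i) (L i + N i)),
            a n * e (∑ i, (j i / N i : ℝ) * n i) := by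
  calc ∑ n ∈ Fintype.piFinset s, a n
      = ∑ n ∈ Fintype.piFinset (fun i => Ioc (L i) (L i + N i)),
          a n * ∏ i, (if n i ∈ s i then 1 else 0 : ℂ) := by
        simp only [prod_boole, mul_ite, mul_one, mul_zero, ← sum_filter]
        congr 1
        ext n
        simp only [mem_filter, Fintype.mem_piFinset, mem_univ, true_implies]
        exact ⟨fun h => ⟨fun i => hs i (h i), h⟩, And.right⟩
    _ = ∑ n ∈ Fintype.piFinset (fun i => Ioc (L i) (L i + N i)),
          a n * ∑ j ∈ Fintype.piFinset (fun i => range (N i)),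
            ∏ i, indicatorCoeff (N i) (s i) (j i / N i) * e (j i / N i * n i) := by
        refine sum_congr rfl fun n hn => ?_
        rw [← prod_univ_sum (fun i => range (N i))
          fun i j => indicatorCoeff (N i) (s i) (j / N i) * e (j / N i * n i)]
        congr 1
        exact prod_congr rfl fun i _ =>
          indicator_eq_sum_indicatorCoeff_mul (hs i) (Fintype.mem_piFinset.1 hn i)
    _ = _ := by
        simp only [mul_sum, prod_mul_distrib, ← e_sum]
        rw [sum_comm]
        refine sum_congr rfl fun j _ => sum_congr rfl fun n _ => ?_
        ring

lemma norm_sum_piFinset_le (hs : ∀ i, s i ⊆ Ioc (L i) (L i + N i)) (a : (Fin k → ℤ) → ℂ)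
    {S : ℝ} (hS : ∀ θ : Fin k → ℝ,
      ‖∑ n ∈ Fintype.piFinset (fun i => Ioc (L i) (L i + N i)), a n * e (∑ i, θ i * n i)‖ ≤ S) :
    ‖∑ n ∈ Fintype.piFinset s, a n‖ ≤
      (∏ i, ∑ j ∈ range (N i), ‖indicatorCoeff (N i) (s i) (j / N i)‖) * S := by
  rw [sum_piFinset_eq_sum_indicatorCoeff_mul hs, prod_univ_sum, sum_mul]
  refine (norm_sum_le _ _).trans (sum_le_sum fun j _ => ?_)
  rw [norm_mul, norm_prod]
  gcongr
  exact hS _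

end Box

lemma two_add_log_le_four_mul_log {N : ℕ} {B : ℝ} (hB : 0 < B) (hN : (N : ℝ) ≤ B + 2) :
    2 + log N ≤ 4 * log (B + 2) := by
  have hlogN : log N ≤ log (B + 2) := by
    rcases N.eq_zero_or_pos with rfl | hN₀
    · simpa using (log_pos (by linarith)).le
    · exact log_le_log (by exact_mod_cast hN₀) hN
  have hlog2 : log 2 ≤ log (B + 2) := log_le_log two_pos (by linarith)
  linarith [log_two_gt_d9]

lemma norm_sum_mul_e_le_sum_norm {ι : Type*} (s : Finset ι) (a : ι → ℂ) (φ : ι → ℝ) :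
    ‖∑ n ∈ s, a n * e (φ n)‖ ≤ ∑ n ∈ s, ‖a n‖ :=
  (norm_sum_le _ _).trans_eq (sum_congr rfl fun n _ => by rw [norm_mul, norm_e, mul_one])

theorem stmt_9_general (k : ℕ) :
    ∃ Ck : ℝ, 0 < Ck ∧
      ∀ (A B : Fin k → ℝ), (∀ i, 0 < B i) →
      ∀ (a : (Fin k → ℤ) → ℂ),
        (∀ n : Fin k → ℤ, (¬ ∀ i, A i < (n i : ℝ) ∧ (n i : ℝ) ≤ A i + B i) → a n = 0) →
      ∀ (c D : Fin k → ℝ), (∀ i, 0 < D i) →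
        (∀ i, A i ≤ c i ∧ c i + D i ≤ A i + B i) →
        ‖∑ n ∈ Fintype.piFinset (fun i => Finset.Ioc ⌊c i⌋ ⌊c i + D i⌋), a n‖ ≤
          Ck * (∏ i, Real.log (B i + 2)) *
            sSup {t : ℝ | ∃ θ : Fin k → ℝ,
              t = ‖∑ n ∈ Fintype.piFinset (fun i => Finset.Ioc ⌊A i⌋ ⌊A i + B i⌋),
                a n * e (∑ i, θ i * (n i : ℝ))‖} := by
  refine ⟨4 ^ k, by positivity, fun A B hB a _ c D _ hcD => ?_⟩
  set N : Fin k → ℕ := fun i => (⌊A i + B i⌋ - ⌊A i⌋).toNat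
  have hfloor : ∀ i, ⌊A i + B i⌋ = ⌊A i⌋ + N i := fun i => by
    have := Int.floor_le_floor (le_add_of_nonneg_right (a := A i) (hB i).le)
    simp only [N]
    omega
  have hNB : ∀ i, (N i : ℝ) ≤ B i + 2 := fun i => by
    have h := Int.floor_le (A i + B i)
    rw [hfloor, Int.cast_add, Int.cast_natCast] at h
    linarith [Int.sub_one_lt_floor (A i)]
  have hp : ∀ i, ⌊A i⌋ ≤ ⌊c i⌋ := fun i => Int.floor_mono (hcD i).1
  have hq : ∀ i, ⌊c i + D i⌋ ≤ ⌊A i⌋ + N i := fun i => hfloor i ▸ Int.floor_mono (hcD i).2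
  have hI : ∀ i, Ioc ⌊c i⌋ ⌊c i + D i⌋ ⊆ Ioc ⌊A i⌋ (⌊A i⌋ + N i) := fun i =>
    Ioc_subset_Ioc (hp i) (hq i)
  set T := {t : ℝ | ∃ θ : Fin k → ℝ, t = ‖∑ n ∈ Fintype.piFinset (fun i => Ioc ⌊A i⌋ ⌊A i + B i⌋),
    a n * e (∑ i, θ i * (n i : ℝ))‖}
  have hT : ∀ θ : Fin k → ℝ, ‖∑ n ∈ Fintype.piFinset (fun i => Ioc ⌊A i⌋ (⌊A i⌋ + N i)),
      a n * e (∑ i, θ i * (n i : ℝ))‖ ≤ sSup T := fun θ => by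
    simp only [← hfloor]
    exact le_csSup ⟨_, by rintro _ ⟨θ, rfl⟩; exact norm_sum_mul_e_le_sum_norm _ _ _⟩ ⟨θ, rfl⟩
  calc _ ≤ (∏ i, ∑ j ∈ range (N i), ‖indicatorCoeff (N i) (Ioc ⌊c i⌋ ⌊c i + D i⌋) (j / N i)‖)
        * sSup T := norm_sum_piFinset_le hI a hT
    _ ≤ (∏ i, 4 * log (B i + 2)) * sSup T := by
        have hT₀ : 0 ≤ sSup T := (norm_nonneg _).trans (hT 0)
        gcongr with i
        refine (sum_norm_indicatorCoeff_Ioc_le ?_).trans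
          (two_add_log_le_four_mul_log (hB i) (hNB i))
        linarith [hp i, hq i]
    _ = 4 ^ k * (∏ i, log (B i + 2)) * sSup T := by
        rw [prod_mul_distrib, prod_const, card_univ, Fintype.card_fin]

theorem stmt_9 (k : ℕ) (hk : 0 < k) :
    ∃ Ck : ℝ, 0 < Ck ∧
      ∀ (A B : Fin k → ℝ), (∀ i, 0 < B i) →
      ∀ (a : (Fin k → ℤ) → ℂ),
        (∀ n : Fin k → ℤ, (¬ ∀ i, A i < (n i : ℝ) ∧ (n i : ℝ) ≤ A i + B i) → a n = 0) →
      ∀ (c D : Fin k → ℝ), (∀ i, 0 < D i) →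
        (∀ i, A i ≤ c i ∧ c i + D i ≤ A i + B i) →
        ‖∑ n ∈ Fintype.piFinset (fun i => Finset.Ioc ⌊c i⌋ ⌊c i + D i⌋), a n‖ ≤
          Ck * (∏ i, Real.log (B i + 2)) *
            sSup {t : ℝ | ∃ θ : Fin k → ℝ,
              t = ‖∑ n ∈ Fintype.piFinset (fun i => Finset.Ioc ⌊A i⌋ ⌊A i + B i⌋),
                a n * e (∑ i, θ i * (n i : ℝ))‖} :=
  stmt_9_general k
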